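/- arXiv:2003.11964 — 4 statements merged into one kernel-verified Lean document; each statement's English description precedes it below -/
import Mathlib

section
/- Let X₁, X₂, … be a sequence of real random variables each with mean μ, with Var(X_i) ≤ c < ∞ for all i, and with Cov(X_i, X_j) → 0 as |i−j| → ∞. Then the partial averages (X₁ + ⋯ + X_n)/n converge in probability to μ: for every ε > 0, lim_{n→∞} P(|(X₁+⋯+X_n)/n − μ| ≥ ε) = 0. -/
/-!
By Chebyshev, the probability is at most `Var[S_n / n] / ε² = (∑_{i,j<n} Cov(X_i, X_j)) / (n ε)²`.
All covariances are bounded by `c`, since `|Cov(X, Y)| ≤ (Var X + Var Y) / 2`, and those with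
`|i - j| ≥ M` by `δ`; each row has at most `2M` entries of the first kind, so the double sum
is at most `n (2Mc + nδ)`, which is `o(n²)` because `δ` is arbitrary.
-/

open MeasureTheory ProbabilityTheory Filter Finset

lemma ProbabilityTheory.abs_covariance_le_add_variance {Ω : Type*} {m0 : MeasurableSpace Ω}
    {P : Measure Ω} [IsFiniteMeasure P] {X Y : Ω → ℝ} (hX : MemLp X 2 P) (hY : MemLp Y 2 P) :
    |cov[X, Y; P]| ≤ (Var[X; P] + Var[Y; P]) / 2 := by
  have h_add := variance_add hX hY
  have h_sub := variance_sub hX hY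
  have h_add_nonneg := variance_nonneg (X + Y) P
  have h_sub_nonneg := variance_nonneg (X - Y) P
  rw [abs_le]
  constructor <;> linarith

lemma card_filter_max_sub_lt_le (n i M : ℕ) :
    #{j ∈ range n | max (i - j) (j - i) < M} ≤ 2 * M := by
  calc #{j ∈ range n | max (i - j) (j - i) < M} ≤ #(Ico (i - M) (i + M)) := by
        refine card_le_card fun j hj => ?_
        simp only [mem_filter, mem_range, max_lt_iff] at hj
        rw [mem_Ico]
        omega
    _ ≤ 2 * M := by rw [Nat.card_Ico]; omega

section Decay

variable {a : ℕ → ℕ → ℝ} {c : ℝ}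

lemma sum_abs_le_of_decay {δ : ℝ} {M : ℕ} (hc : ∀ i j, |a i j| ≤ c)
    (hδ : ∀ i j, M ≤ max (i - j) (j - i) → |a i j| ≤ δ) (n i : ℕ) :
    ∑ j ∈ range n, |a i j| ≤ 2 * M * c + n * δ := by
  have hc0 : 0 ≤ c := (abs_nonneg _).trans (hc 0 0)
  have hδ0 : 0 ≤ δ := (abs_nonneg _).trans (hδ 0 M (by simp))
  rw [← sum_filter_add_sum_filter_not (range n) (fun j => max (i - j) (j - i) < M)]
  gcongr
  · calc _ ≤ #{j ∈ range n | max (i - j) (j - i) < M} • c :=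
          sum_le_card_nsmul _ _ _ fun j _ => hc i j
      _ ≤ (2 * M) • c := nsmul_le_nsmul_left hc0 (card_filter_max_sub_lt_le n i M)
      _ = 2 * M * c := by rw [nsmul_eq_mul]; push_cast; ring
  · calc _ ≤ #{j ∈ range n | ¬ max (i - j) (j - i) < M} • δ := by
          exact sum_le_card_nsmul _ _ _ fun j hj => hδ i j (not_lt.1 (mem_filter.1 hj).2)
      _ ≤ n • δ := nsmul_le_nsmul_left hδ0 ((card_filter_le _ _).trans (card_range n).le)
      _ = n * δ := nsmul_eq_mul _ _

lemma abs_sum_sum_le_of_decay {δ : ℝ} {M : ℕ} (hc : ∀ i j, |a i j| ≤ c)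
    (hδ : ∀ i j, M ≤ max (i - j) (j - i) → |a i j| ≤ δ) (n : ℕ) :
    |∑ i ∈ range n, ∑ j ∈ range n, a i j| ≤ n * (2 * M * c + n * δ) :=
  calc |∑ i ∈ range n, ∑ j ∈ range n, a i j|
      ≤ ∑ i ∈ range n, ∑ j ∈ range n, |a i j| :=
        (abs_sum_le_sum_abs _ _).trans (sum_le_sum fun i _ => abs_sum_le_sum_abs _ _)
    _ ≤ ∑ _i ∈ range n, (2 * M * c + n * δ) :=
        sum_le_sum fun i _ => sum_abs_le_of_decay hc hδ n i
    _ = n * (2 * M * c + n * δ) := by rw [sum_const, card_range, nsmul_eq_mul]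

lemma tendsto_sum_sum_div_sq_of_decay (hc : ∀ i j, |a i j| ≤ c)
    (hdecay : ∀ δ > (0 : ℝ), ∃ M : ℕ, ∀ i j : ℕ, M ≤ max (i - j) (j - i) → |a i j| ≤ δ) :
    Tendsto (fun n : ℕ => (∑ i ∈ range n, ∑ j ∈ range n, a i j) / n ^ 2) atTop (nhds 0) := by
  rw [Metric.tendsto_nhds]
  intro ε hε
  obtain ⟨M, hM⟩ := hdecay (ε / 2) (half_pos hε)
  have hsmall : ∀ᶠ n : ℕ in atTop, 2 * M * c / n < ε / 2 :=
    (tendsto_const_div_atTop_nhds_zero_nat (2 * M * c)).eventually (gt_mem_nhds (half_pos hε))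
  filter_upwards [hsmall, eventually_gt_atTop 0] with n hn hn0
  have hn0' : (0 : ℝ) < n := by exact_mod_cast hn0
  calc dist ((∑ i ∈ range n, ∑ j ∈ range n, a i j) / n ^ 2) 0
      = |∑ i ∈ range n, ∑ j ∈ range n, a i j| / n ^ 2 := by
        rw [Real.dist_0_eq_abs, abs_div, abs_of_pos (pow_pos hn0' 2)]
    _ ≤ n * (2 * M * c + n * (ε / 2)) / n ^ 2 := by
        gcongr; exact abs_sum_sum_le_of_decay hc hM n
    _ = 2 * M * c / n + ε / 2 := by field_simp
    _ < ε := by linarith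

end Decay

lemma ProbabilityTheory.meas_ge_le_ofReal_sum_covariance {Ω : Type*} {m0 : MeasurableSpace Ω}
    (P : Measure Ω) [IsProbabilityMeasure P] (X : ℕ → Ω → ℝ) {μ : ℝ}
    (hL2 : ∀ i, MemLp (X i) 2 P) (hmean : ∀ i, ∫ ω, X i ω ∂P = μ) {n : ℕ} (hn : n ≠ 0)
    {ε : ℝ} (hε : 0 < ε) :
    P {ω | ε ≤ |(∑ i ∈ range n, X i ω) / n - μ|}
      ≤ ENNReal.ofReal ((∑ i ∈ range n, ∑ j ∈ range n, cov[X i, X j; P]) / n ^ 2 / ε ^ 2) := by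
  have hS : MemLp (fun ω => (∑ i ∈ range n, X i ω) / n) 2 P := by
    simpa only [div_eq_mul_inv] using (memLp_finsetSum _ fun i _ => hL2 i).mul_const (n : ℝ)⁻¹
  have h_mean : P[fun ω => (∑ i ∈ range n, X i ω) / n] = μ := by
    rw [integral_div, integral_finsetSum _ fun i _ => (hL2 i).integrable one_le_two]
    simp only [hmean, sum_const, card_range, nsmul_eq_mul]
    field_simp
  have h_var : Var[fun ω => (∑ i ∈ range n, X i ω) / n; P]
      = (∑ i ∈ range n, ∑ j ∈ range n, cov[X i, X j; P]) / n ^ 2 := by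
    simp_rw [div_eq_mul_inv _ (n : ℝ)]
    rw [variance_mul_const, variance_fun_sum' fun i _ => hL2 i, inv_pow, div_eq_mul_inv]
  simpa only [h_mean, h_var] using meas_ge_le_variance_div_sq hS hε

/-- Weak law of large numbers for random variables with common mean, uniformly bounded
variances, and covariances decaying as the index separation grows. -/
theorem stmt3 {Ω : Type*} {m0 : MeasurableSpace Ω} (P : Measure Ω) [IsProbabilityMeasure P]
    (X : ℕ → Ω → ℝ) (μ c : ℝ)
    (hL2 : ∀ i, MemLp (X i) 2 P)
    (hmean : ∀ i, ∫ ω, X i ω ∂P = μ)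
    (hvar : ∀ i, variance (X i) P ≤ c)
    (hcov : ∀ δ > (0 : ℝ), ∃ M : ℕ, ∀ i j : ℕ, M ≤ max (i - j) (j - i) →
      |∫ ω, (X i ω - μ) * (X j ω - μ) ∂P| ≤ δ) :
    ∀ ε > (0 : ℝ), Tendsto (fun n : ℕ =>
      P {ω | ε ≤ |(∑ i ∈ Finset.range n, X i ω) / n - μ|}) atTop (nhds 0) := by
  intro ε hε
  have hcov_eq : ∀ i j, cov[X i, X j; P] = ∫ ω, (X i ω - μ) * (X j ω - μ) ∂P := by
    simp only [covariance, hmean, implies_true]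
  have hcov_le : ∀ i j, |cov[X i, X j; P]| ≤ c := fun i j =>
    (abs_covariance_le_add_variance (hL2 i) (hL2 j)).trans (by linarith [hvar i, hvar j])
  have hvar_avg := ENNReal.tendsto_ofReal <| (tendsto_sum_sum_div_sq_of_decay hcov_le
    (by simpa only [hcov_eq] using hcov)).div_const (ε ^ 2)
  rw [zero_div, ENNReal.ofReal_zero] at hvar_avg
  refine tendsto_of_tendsto_of_tendsto_of_le_of_le' tendsto_const_nhds hvar_avg
    (Eventually.of_forall fun _ => bot_le) ?_
  filter_upwards [eventually_ne_atTop 0] with n hn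
  exact meas_ge_le_ofReal_sum_covariance P X hL2 hmean hn hε
end

section
/- Let φ : ℝ² → ℝ be PL(2) with constant L, and define φ_m : ℝᵐ × ℝᵐ → ℝ by φ_m(a, ã) = (1/m)·Σ_{i=1}^m φ(a_i, ã_i). Then φ_m is PL(2) with constant √3·L independent of m; specifically, |φ_m(a,ã) − φ_m(b,b̃)| ≤ √3·L·(1 + ‖(a,ã)‖/√(2m) + ‖(b,b̃)‖/√(2m))·‖(a,ã)−(b,b̃)‖/√(2m). -/
/-!
Sum the pointwise PL(2) bounds. The resulting weights `1 + ‖xᵢ‖/√2 + ‖yᵢ‖/√2` pair with the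
increments `‖xᵢ - yᵢ‖`; applying Cauchy–Schwarz to each of the three terms separately gives
`(√m + ‖x‖/√2 + ‖y‖/√2)·‖x - y‖`, and dividing by `m` yields the claim with constant `L`.
Since `L ≤ √3·L`, the bound with `√3·L` follows.
-/

open Finset Real

def PseudoLipschitzTwo (L : ℝ) (φ : ℝ → ℝ → ℝ) : Prop :=
  ∀ a1 a2 b1 b2 : ℝ, |φ a1 a2 - φ b1 b2| ≤
    L * (1 + √(a1 ^ 2 + a2 ^ 2) / √2 + √(b1 ^ 2 + b2 ^ 2) / √2) *
      (√((a1 - b1) ^ 2 + (a2 - b2) ^ 2) / √2)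

theorem sum_one_add_sqrt_mul_sqrt_le {ι : Type*} [Fintype ι] {A B D : ι → ℝ}
    (hA : ∀ i, 0 ≤ A i) (hB : ∀ i, 0 ≤ B i) (hD : ∀ i, 0 ≤ D i) :
    ∑ i, (1 + √(A i) / √2 + √(B i) / √2) * √(D i) ≤
      (√(Fintype.card ι) + √(∑ i, A i) / √2 + √(∑ i, B i) / √2) * √(∑ i, D i) := by
  have hone : ∑ i, √(D i) ≤ √(Fintype.card ι) * √(∑ i, D i) := by
    simpa using sum_sqrt_mul_sqrt_le univ (fun _ ↦ zero_le_one) hD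
  have hAD := sum_sqrt_mul_sqrt_le univ hA hD
  have hBD := sum_sqrt_mul_sqrt_le univ hB hD
  have hsplit : ∑ i, (1 + √(A i) / √2 + √(B i) / √2) * √(D i) =
      ∑ i, √(D i) + (∑ i, √(A i) * √(D i)) / √2 + (∑ i, √(B i) * √(D i)) / √2 := by
    simp only [sum_div, ← sum_add_distrib]
    exact sum_congr rfl fun _ _ ↦ by ring
  rw [hsplit, add_mul, add_mul, div_mul_eq_mul_div, div_mul_eq_mul_div]
  gcongr

theorem PseudoLipschitzTwo.sum_abs_sub_le {L : ℝ} {φ : ℝ → ℝ → ℝ} (hφ : PseudoLipschitzTwo L φ)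
    (hL : 0 ≤ L) {ι : Type*} [Fintype ι] (a a' b b' : ι → ℝ) :
    ∑ i, |φ (a i) (a' i) - φ (b i) (b' i)| ≤
      L / √2 * (√(Fintype.card ι) + √(∑ i, (a i ^ 2 + a' i ^ 2)) / √2
        + √(∑ i, (b i ^ 2 + b' i ^ 2)) / √2) *
        √(∑ i, ((a i - b i) ^ 2 + (a' i - b' i) ^ 2)) := by
  calc ∑ i, |φ (a i) (a' i) - φ (b i) (b' i)|
      ≤ ∑ i, L / √2 * ((1 + √(a i ^ 2 + a' i ^ 2) / √2 + √(b i ^ 2 + b' i ^ 2) / √2) *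
          √((a i - b i) ^ 2 + (a' i - b' i) ^ 2)) :=
        sum_le_sum fun i _ ↦ (hφ _ _ _ _).trans_eq (by ring)
    _ ≤ _ := by
        rw [← mul_sum, mul_assoc]
        gcongr
        exact sum_one_add_sqrt_mul_sqrt_le (fun _ ↦ by positivity) (fun _ ↦ by positivity)
          (fun _ ↦ by positivity)

/-- If φ : ℝ² → ℝ is PL(2) with constant L, the coordinatewise average
φ_m(a,ã) = (1/m) Σ φ(a_i, ã_i) is PL(2) with constant √3·L, uniformly in m. -/
theorem stmt5 (m : ℕ) (hm : 0 < m) (L : ℝ) (hL : 0 < L) (φ : ℝ → ℝ → ℝ)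
    (hφ : ∀ a1 a2 b1 b2 : ℝ, |φ a1 a2 - φ b1 b2| ≤
      L * (1 + Real.sqrt (a1 ^ 2 + a2 ^ 2) / Real.sqrt 2
             + Real.sqrt (b1 ^ 2 + b2 ^ 2) / Real.sqrt 2) *
        (Real.sqrt ((a1 - b1) ^ 2 + (a2 - b2) ^ 2) / Real.sqrt 2))
    (a a' b b' : Fin m → ℝ) :
    |(1 / (m : ℝ)) * ∑ i, φ (a i) (a' i) - (1 / (m : ℝ)) * ∑ i, φ (b i) (b' i)| ≤
      Real.sqrt 3 * L *
        (1 + Real.sqrt (∑ i, (a i ^ 2 + a' i ^ 2)) / Real.sqrt (2 * m)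
           + Real.sqrt (∑ i, (b i ^ 2 + b' i ^ 2)) / Real.sqrt (2 * m)) *
        (Real.sqrt (∑ i, ((a i - b i) ^ 2 + (a' i - b' i) ^ 2)) / Real.sqrt (2 * m)) := by
  have hsum := PseudoLipschitzTwo.sum_abs_sub_le hφ hL.le a a' b b'
  rw [Fintype.card_fin] at hsum
  set SA := ∑ i, (a i ^ 2 + a' i ^ 2)
  set SB := ∑ i, (b i ^ 2 + b' i ^ 2)
  set SD := ∑ i, ((a i - b i) ^ 2 + (a' i - b' i) ^ 2)
  have hsm : 0 < √(m : ℝ) := sqrt_pos.2 (by exact_mod_cast hm)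
  have hL3 : L ≤ √3 * L := le_mul_of_one_le_left hL.le (one_le_sqrt.2 (by norm_num))
  calc |(1 / (m : ℝ)) * ∑ i, φ (a i) (a' i) - (1 / (m : ℝ)) * ∑ i, φ (b i) (b' i)|
      ≤ 1 / m * ∑ i, |φ (a i) (a' i) - φ (b i) (b' i)| := by
        rw [← mul_sub, ← sum_sub_distrib, abs_mul, abs_of_nonneg (by positivity)]
        gcongr
        exact abs_sum_le_sum_abs _ _
    _ ≤ 1 / m * (L / √2 * (√m + √SA / √2 + √SB / √2) * √SD) := by gcongr
    _ = L * (1 + √SA / √(2 * m) + √SB / √(2 * m)) * (√SD / √(2 * m)) := by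
        rw [sqrt_mul zero_le_two]
        field_simp
        rw [sq_sqrt (Nat.cast_nonneg m)]
    _ ≤ √3 * L * (1 + √SA / √(2 * m) + √SB / √(2 * m)) * (√SD / √(2 * m)) := by gcongr
end

section
/- Define the Bernoulli–Gaussian denoiser η(a,b) = f(a,b)/(1 + T(a,b)) where f(a,b) = (σ²a + λ²b)/(σ² + λ² + σ²λ²) and T(a,b) = ((1−ε)/ε)·(ν√(2π)/(λ²σ²))·ρ_ν(σ²a + λ²b) with ν = σ²λ²(σ² + λ² + σ²λ²) and ρ_ν the centered Gaussian density with variance ν, for parameters 0 < ε < 1, σ > 0, λ ≥ σ_w > 0. Then the partial derivatives satisfy |∂η/∂a| ≤ 1 + 2(1−ε)/(σ_w·ε) and |∂η/∂b| ≤ 1 + 2(1−ε)/(σ·ε) everywhere; consequently η is Lipschitz continuous on ℝ². -/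
/-!
Write `η a b = g (σ²a + λ²b)` with the one-variable shrinkage
`g x = (x / D) / (1 + A e^{-x²/(2ν)})`, `D = σ² + λ² + σ²λ²`, `A = ((1-ε)/ε) √ν / (λ²σ²)`.
With `h = 1 + A e^{-x²/(2ν)} ≥ 1`, `g' = (1 + (x²/ν) A e^{-x²/(2ν)} / h) / (D h)`, and
`t e^{-t} ≤ 1` at `t = x²/(2ν)` gives `0 ≤ g' ≤ (1 + 2A) / D`. The chain rule multiplies this
by `σ²` (resp. `λ²`), and `ν = σ²λ²D ≤ λ²D²` (resp. `≤ σ²D²`) bounds `2A σ² / D` by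
`2(1-ε)/(ελ)` (resp. `2A λ² / D` by `2(1-ε)/(εσ)`). Being `g` composed with a linear map,
`η` is Lipschitz.
-/

open Real

lemma mul_exp_neg_le_one (t : ℝ) : t * exp (-t) ≤ 1 := by
  rw [exp_neg, ← div_eq_mul_inv, div_le_one (exp_pos t)]
  linarith [add_one_le_exp t]

noncomputable def shrinkage (D A ν x : ℝ) : ℝ := x / D / (1 + A * exp (-x ^ 2 / (2 * ν)))

section shrinkage

variable {D A ν : ℝ}

lemma hasDerivAt_shrinkage (hA : 0 ≤ A) (hν : 0 < ν) (x : ℝ) :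
    HasDerivAt (shrinkage D A ν)
      ((1 + x ^ 2 / ν * (A * exp (-x ^ 2 / (2 * ν))) / (1 + A * exp (-x ^ 2 / (2 * ν)))) /
        (D * (1 + A * exp (-x ^ 2 / (2 * ν))))) x := by
  have hexp : HasDerivAt (fun y => -y ^ 2 / (2 * ν)) (-(x / ν)) x :=
    (((hasDerivAt_pow 2 x).neg).div_const (2 * ν)).congr_deriv (by field_simp; ring)
  have hden := (hexp.exp.const_mul A).const_add 1
  exact (((hasDerivAt_id x).div_const D).div hden (by positivity)).congr_deriv
    (by simp only [id]; field_simp; ring)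

lemma differentiable_shrinkage (hA : 0 ≤ A) (hν : 0 < ν) : Differentiable ℝ (shrinkage D A ν) :=
  fun x => (hasDerivAt_shrinkage hA hν x).differentiableAt

lemma abs_deriv_shrinkage_le (hD : 0 < D) (hA : 0 ≤ A) (hν : 0 < ν) (x : ℝ) :
    |deriv (shrinkage D A ν) x| ≤ (1 + 2 * A) / D := by
  rw [(hasDerivAt_shrinkage hA hν x).deriv]
  set e := exp (-x ^ 2 / (2 * ν))
  have hh : 1 ≤ 1 + A * e := le_add_of_nonneg_right (by positivity)
  have hxe : x ^ 2 / ν * e ≤ 2 := by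
    have := mul_exp_neg_le_one (x ^ 2 / (2 * ν))
    rw [← neg_div] at this
    calc x ^ 2 / ν * e = 2 * (x ^ 2 / (2 * ν) * e) := by field_simp
      _ ≤ 2 := by linarith
  rw [abs_of_nonneg (by positivity)]
  gcongr ?_ / ?_
  · calc 1 + x ^ 2 / ν * (A * e) / (1 + A * e) ≤ 1 + x ^ 2 / ν * (A * e) := by
          gcongr
          exact div_le_self (by positivity) hh
      _ ≤ 1 + 2 * A := by nlinarith
  · exact le_mul_of_one_le_right hD.le hh

lemma lipschitzWith_shrinkage (hD : 0 < D) (hA : 0 ≤ A) (hν : 0 < ν) :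
    LipschitzWith ((1 + 2 * A) / D).toNNReal (shrinkage D A ν) := by
  refine lipschitzWith_of_nnnorm_deriv_le (differentiable_shrinkage hA hν) fun x => ?_
  rw [← NNReal.coe_le_coe, coe_nnnorm, Real.norm_eq_abs, Real.coe_toNNReal _ (by positivity)]
  exact abs_deriv_shrinkage_le hD hA hν x

end shrinkage

lemma deriv_comp_mul_add {g : ℝ → ℝ} (hg : Differentiable ℝ g) (s t x : ℝ) :
    deriv (fun y => g (s * y + t)) x = s * deriv g (s * x + t) := by
  have := (hg (s * x + t)).hasDerivAt.comp x (((hasDerivAt_id x).const_mul s).add_const t)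
  exact this.deriv.trans (by ring)

lemma abs_deriv_shrinkage_comp_le {D A ν : ℝ} (hD : 0 < D) (hA : 0 ≤ A) (hν : 0 < ν)
    (s t x : ℝ) :
    |deriv (fun y => shrinkage D A ν (s * y + t)) x| ≤ |s| * ((1 + 2 * A) / D) := by
  rw [deriv_comp_mul_add (differentiable_shrinkage hA hν), abs_mul]
  gcongr
  exact abs_deriv_shrinkage_le hD hA hν _

lemma sq_mul_one_add_two_mul_div_le {σ l k D ν A : ℝ} (hσ : 0 < σ) (hl : 0 < l) (hk : 0 ≤ k)
    (hD : σ ^ 2 ≤ D) (hν : ν = σ ^ 2 * l ^ 2 * D) (hA : A = k * (√ν / (l ^ 2 * σ ^ 2))) :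
    σ ^ 2 * ((1 + 2 * A) / D) ≤ 1 + 2 * k / l := by
  have hD0 : 0 < D := (pow_pos hσ 2).trans_le hD
  have hsqrt : √ν ≤ l * D := by
    rw [← sqrt_sq (mul_pos hl hD0).le]
    exact sqrt_le_sqrt (by rw [hν]; nlinarith [mul_pos (pow_pos hl 2) hD0])
  have hsplit : σ ^ 2 * ((1 + 2 * A) / D) = σ ^ 2 / D + 2 * k / l * (√ν / (l * D)) := by
    rw [hA]; field_simp
  rw [hsplit]
  gcongr
  · exact (div_le_one hD0).2 hD
  · exact mul_le_of_le_one_right (by positivity) ((div_le_one (mul_pos hl hD0)).2 hsqrt)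

lemma mul_sqrt_two_pi_div_mul_one_div_sqrt {ν : ℝ} (hν : 0 < ν) (m : ℝ) :
    ν * √(2 * π) / m * (1 / √(2 * π * ν)) = √ν / m := by
  rw [sqrt_mul (by positivity : (0 : ℝ) ≤ 2 * π) ν]
  field_simp
  rw [sq_sqrt hν.le]

/-- The Bernoulli–Gaussian denoiser η(a,b) = f(a,b)/(1+T(a,b)) has partial derivatives
bounded by 1 + 2(1−ε)/(σ_w ε) and 1 + 2(1−ε)/(σ ε); consequently it is Lipschitz. -/
theorem stmt11 (ε σ lam σw : ℝ) (hε0 : 0 < ε) (hε1 : ε < 1) (hσ : 0 < σ) (hσw : 0 < σw)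
    (hlam : σw ≤ lam) :
    let ν : ℝ := σ ^ 2 * lam ^ 2 * (σ ^ 2 + lam ^ 2 + σ ^ 2 * lam ^ 2)
    let ρ : ℝ → ℝ := fun x => (1 / Real.sqrt (2 * Real.pi * ν)) * Real.exp (-x ^ 2 / (2 * ν))
    let f : ℝ → ℝ → ℝ := fun a b =>
      (σ ^ 2 * a + lam ^ 2 * b) / (σ ^ 2 + lam ^ 2 + σ ^ 2 * lam ^ 2)
    let T : ℝ → ℝ → ℝ := fun a b =>
      ((1 - ε) / ε) * (ν * Real.sqrt (2 * Real.pi) / (lam ^ 2 * σ ^ 2)) *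
        ρ (σ ^ 2 * a + lam ^ 2 * b)
    let η : ℝ → ℝ → ℝ := fun a b => f a b / (1 + T a b)
    (∀ a b : ℝ, |deriv (fun a' => η a' b) a| ≤ 1 + 2 * (1 - ε) / (σw * ε)) ∧
    (∀ a b : ℝ, |deriv (fun b' => η a b') b| ≤ 1 + 2 * (1 - ε) / (σ * ε)) ∧
    ∃ C : NNReal, LipschitzWith C (fun p : ℝ × ℝ => η p.1 p.2) := by
  intro ν ρ f T η
  have hlam0 : 0 < lam := hσw.trans_le hlam
  have hν : 0 < ν := by positivity
  have hη : ∀ a b, η a b = shrinkage (σ ^ 2 + lam ^ 2 + σ ^ 2 * lam ^ 2)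
      ((1 - ε) / ε * (√ν / (lam ^ 2 * σ ^ 2))) ν (σ ^ 2 * a + lam ^ 2 * b) := fun a b => by
    simp only [η, f, T, ρ, shrinkage, ← mul_sqrt_two_pi_div_mul_one_div_sqrt hν, mul_assoc]
  generalize hD : σ ^ 2 + lam ^ 2 + σ ^ 2 * lam ^ 2 = D at hη
  generalize hA : (1 - ε) / ε * (√ν / (lam ^ 2 * σ ^ 2)) = A at hη
  have hk : 0 ≤ (1 - ε) / ε := div_nonneg (by linarith) hε0.le
  have hνD : ν = σ ^ 2 * lam ^ 2 * D := by rw [← hD]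
  have hD0 : 0 < D := by rw [← hD]; positivity
  have hA0 : 0 ≤ A := by rw [← hA]; exact mul_nonneg hk (by positivity)
  have hderiv := abs_deriv_shrinkage_comp_le hD0 hA0 hν
  refine ⟨fun a b => ?_, fun a b => ?_, ?_⟩
  · simp only [hη]
    calc _ ≤ σ ^ 2 * ((1 + 2 * A) / D) := (hderiv _ _ a).trans_eq (by rw [abs_sq])
      _ ≤ 1 + 2 * ((1 - ε) / ε) / lam :=
        sq_mul_one_add_two_mul_div_le hσ hlam0 hk (by rw [← hD]; nlinarith) hνD hA.symm
      _ ≤ 1 + 2 * ((1 - ε) / ε) / σw := by gcongr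
      _ = 1 + 2 * (1 - ε) / (σw * ε) := by ring
  · simp only [hη, add_comm (σ ^ 2 * a)]
    calc _ ≤ lam ^ 2 * ((1 + 2 * A) / D) := (hderiv _ _ b).trans_eq (by rw [abs_sq])
      _ ≤ 1 + 2 * ((1 - ε) / ε) / σ :=
        sq_mul_one_add_two_mul_div_le (ν := ν) hlam0 hσ hk (by rw [← hD]; nlinarith)
          (by rw [hνD]; ring) (by rw [← hA, mul_comm (lam ^ 2)])
      _ = 1 + 2 * (1 - ε) / (σ * ε) := by ring
  · let L := σ ^ 2 • ContinuousLinearMap.fst ℝ ℝ ℝ + lam ^ 2 • ContinuousLinearMap.snd ℝ ℝ ℝ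
    have hηL : (fun p : ℝ × ℝ => η p.1 p.2) = shrinkage D A ν ∘ L :=
      funext fun p => hη p.1 p.2
    exact ⟨_, hηL ▸ (lipschitzWith_shrinkage hD0 hA0 hν).comp L.lipschitz⟩
end

section
/- For any product T(a,b)·f(a,b) = ((1−ε)/ε)·√(2π)·(σ²a + λ²b)·ρ_ν(σ²a + λ²b) with ν = σ²λ²(σ²+λ²+σ²λ²), the partial derivative with respect to a satisfies |∂(T·f)/∂a| = ((1−ε)/ε)·(√(2π)σ²/ν)·ρ_ν(σ²a+λ²b)·|ν − (σ²a+λ²b)²| ≤ 2(1−ε)/(σ_w·ε), provided λ ≥ σ_w > 0. -/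
/-!
With `y = σ²a + λ²b` the function is `C·y·ρ_ν(y)`, and `ρ_ν'(y) = −(y/ν)ρ_ν(y)` makes its
derivative `C·(σ²/ν)·ρ_ν(y)·(ν − y²)`. For the bound, `e^{-t} ≤ 1/(1+t)` gives
`ρ_ν(y) ≤ √(2/π)·√ν/(2ν + y²)` while `|ν − y²| ≤ 2ν + y²`, so the expression is at most
`2·((1−ε)/ε)·σ²/√ν`; finally `√ν ≥ σ²λ ≥ σ²σ_w`.
-/

open Real ProbabilityTheory
open scoped NNReal

lemma hasDerivAt_gaussianPDFReal (μ : ℝ) (v : ℝ≥0) (x : ℝ) :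
    HasDerivAt (gaussianPDFReal μ v) (-(x - μ) / v * gaussianPDFReal μ v x) x := by
  have hexponent : HasDerivAt (fun x => -(x - μ) ^ 2 / (2 * v)) (-(x - μ) / v) x := by
    refine ((((hasDerivAt_id' x).sub_const μ).pow 2).neg.div_const (2 * (v : ℝ))).congr_deriv ?_
    rw [neg_div, neg_div, Nat.cast_ofNat, pow_one, mul_one, mul_div_mul_left _ _ two_ne_zero]
  have h := hexponent.exp.const_mul (√(2 * π * v))⁻¹
  rw [← gaussianPDFReal_def] at h
  refine h.congr_deriv ?_
  rw [gaussianPDFReal_def]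
  ring

lemma hasDerivAt_mul_gaussianPDFReal {v : ℝ≥0} (hv : v ≠ 0) (x : ℝ) :
    HasDerivAt (fun x => x * gaussianPDFReal 0 v x) ((v - x ^ 2) / v * gaussianPDFReal 0 v x) x := by
  refine ((hasDerivAt_id' x).mul (hasDerivAt_gaussianPDFReal 0 v x)).congr_deriv ?_
  have hv' : (v : ℝ) ≠ 0 := by exact_mod_cast hv
  field_simp
  ring

lemma hasDerivAt_affine_mul_gaussianPDFReal {v : ℝ≥0} (hv : v ≠ 0) (c s t a : ℝ) :
    HasDerivAt (fun a => c * (s * a + t) * gaussianPDFReal 0 v (s * a + t))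
      (c * (s / v) * gaussianPDFReal 0 v (s * a + t) * (v - (s * a + t) ^ 2)) a := by
  have hinner : HasDerivAt (fun a => s * a + t) s a := by
    simpa using ((hasDerivAt_id a).const_mul s).add_const t
  have h := ((hasDerivAt_mul_gaussianPDFReal hv (s * a + t)).comp a hinner).const_mul c
  simp only [Function.comp_def, ← mul_assoc] at h
  exact h.congr_deriv (by ring)

lemma gaussianPDFReal_le {v : ℝ≥0} (hv : v ≠ 0) (x : ℝ) :
    gaussianPDFReal 0 v x ≤ √(2 / π) * √v / (2 * v + x ^ 2) := by
  have hv' : (0 : ℝ) < v := by positivity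
  have hexp : rexp (-x ^ 2 / (2 * v)) ≤ 2 * v / (2 * v + x ^ 2) := by
    rw [neg_div, exp_neg, ← one_div, div_le_div_iff₀ (exp_pos _) (by positivity)]
    have := add_one_le_exp (x ^ 2 / (2 * v))
    rw [div_add_one (by positivity), div_le_iff₀ (by positivity)] at this
    linarith
  have hnorm : √(2 / π) * √v = 2 * v / √(2 * π * v) := by
    rw [sqrt_div' _ pi_pos.le, sqrt_mul' _ hv'.le, sqrt_mul' _ pi_pos.le,
      eq_div_iff (by positivity)]
    field_simp
    rw [sq_sqrt hv'.le, sq_sqrt zero_le_two]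
  calc gaussianPDFReal 0 v x = (√(2 * π * v))⁻¹ * rexp (-x ^ 2 / (2 * v)) := by
        rw [gaussianPDFReal, sub_zero]
    _ ≤ (√(2 * π * v))⁻¹ * (2 * v / (2 * v + x ^ 2)) := by gcongr
    _ = √(2 / π) * √v / (2 * v + x ^ 2) := by rw [hnorm]; ring

lemma sqrt_two_mul_pi_mul_gaussianPDFReal_mul_abs_sub_sq_le {v : ℝ≥0} (hv : v ≠ 0) (x : ℝ) :
    √(2 * π) * (gaussianPDFReal 0 v x * |v - x ^ 2|) ≤ 2 * √v := by
  have hpos : 0 < 2 * (v : ℝ) + x ^ 2 := by positivity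
  have habs : |v - x ^ 2| ≤ 2 * (v : ℝ) + x ^ 2 := by
    rw [abs_sub_le_iff]
    constructor <;> nlinarith [sq_nonneg x, v.coe_nonneg]
  have hnorm : √(2 * π) * √(2 / π) = 2 := by
    rw [← sqrt_mul (by positivity), show 2 * π * (2 / π) = 2 ^ 2 by field_simp,
      sqrt_sq zero_le_two]
  calc √(2 * π) * (gaussianPDFReal 0 v x * |v - x ^ 2|)
      ≤ √(2 * π) * (√(2 / π) * √v / (2 * v + x ^ 2) * (2 * v + x ^ 2)) := by
        gcongr √(2 * π) * ?_
        exact mul_le_mul (gaussianPDFReal_le hv x) habs (abs_nonneg _) (by positivity)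
    _ = 2 * √v := by rw [div_mul_cancel₀ _ hpos.ne', ← mul_assoc, hnorm]

lemma sq_div_sqrt_le_inv {σ lam : ℝ} (hσ : σ ≠ 0) (hlam : 0 < lam) :
    σ ^ 2 / √(σ ^ 2 * lam ^ 2 * (σ ^ 2 + lam ^ 2 + σ ^ 2 * lam ^ 2)) ≤ 1 / lam := by
  have hσlam : 0 < σ ^ 2 * lam := by positivity
  have hsqrt : σ ^ 2 * lam ≤ √(σ ^ 2 * lam ^ 2 * (σ ^ 2 + lam ^ 2 + σ ^ 2 * lam ^ 2)) := by
    apply le_sqrt_of_sq_le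
    nlinarith [sq_nonneg (σ * lam ^ 2), sq_nonneg (σ ^ 2 * lam ^ 2), sq_nonneg (σ * lam)]
  calc σ ^ 2 / √(σ ^ 2 * lam ^ 2 * (σ ^ 2 + lam ^ 2 + σ ^ 2 * lam ^ 2))
      ≤ σ ^ 2 / (σ ^ 2 * lam) := div_le_div_of_nonneg_left (sq_nonneg σ) hσlam hsqrt
    _ = 1 / lam := by field_simp

/-- For T·f(a,b) = ((1−ε)/ε)√(2π)(σ²a+λ²b)ρ_ν(σ²a+λ²b), the derivative in a equals
((1−ε)/ε)(√(2π)σ²/ν)ρ_ν(σ²a+λ²b)|ν − (σ²a+λ²b)²| in absolute value, and is bounded by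
2(1−ε)/(σ_w ε) when λ ≥ σ_w > 0. -/
theorem stmt12 (ε σ lam σw : ℝ) (hε0 : 0 < ε) (hε1 : ε < 1) (hσ : 0 < σ) (hσw : 0 < σw)
    (hlam : σw ≤ lam) (b : ℝ) :
    let ν : ℝ := σ ^ 2 * lam ^ 2 * (σ ^ 2 + lam ^ 2 + σ ^ 2 * lam ^ 2)
    let ρ : ℝ → ℝ := fun x => (1 / Real.sqrt (2 * Real.pi * ν)) * Real.exp (-x ^ 2 / (2 * ν))
    ∀ a : ℝ,
      |deriv (fun a' : ℝ => ((1 - ε) / ε) * Real.sqrt (2 * Real.pi) *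
          (σ ^ 2 * a' + lam ^ 2 * b) * ρ (σ ^ 2 * a' + lam ^ 2 * b)) a| =
        ((1 - ε) / ε) * (Real.sqrt (2 * Real.pi) * σ ^ 2 / ν) *
          ρ (σ ^ 2 * a + lam ^ 2 * b) * |ν - (σ ^ 2 * a + lam ^ 2 * b) ^ 2| ∧
      ((1 - ε) / ε) * (Real.sqrt (2 * Real.pi) * σ ^ 2 / ν) *
          ρ (σ ^ 2 * a + lam ^ 2 * b) * |ν - (σ ^ 2 * a + lam ^ 2 * b) ^ 2| ≤
        2 * (1 - ε) / (σw * ε) := by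
  intro ν ρ a
  have hlam0 : 0 < lam := hσw.trans_le hlam
  have hν : 0 < ν := by positivity
  set v : ℝ≥0 := ⟨ν, hν.le⟩
  have hv : v ≠ 0 := ne_of_gt hν
  have hρ : ρ = gaussianPDFReal 0 v := by
    funext x
    simp only [ρ, gaussianPDFReal, sub_zero, one_div]
    rfl
  rw [hρ]
  set y := σ ^ 2 * a + lam ^ 2 * b
  set C := (1 - ε) / ε
  have hC : 0 ≤ C := div_nonneg (by linarith) hε0.le
  have hderiv := hasDerivAt_affine_mul_gaussianPDFReal hv (C * √(2 * π)) (σ ^ 2) (lam ^ 2 * b) a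
  have hgy := gaussianPDFReal_nonneg 0 v y
  constructor
  · rw [hderiv.deriv]
    change |C * √(2 * π) * (σ ^ 2 / ν) * gaussianPDFReal 0 v y * (ν - y ^ 2)| = _
    rw [show C * √(2 * π) * (σ ^ 2 / ν) = C * (√(2 * π) * σ ^ 2 / ν) by ring,
      abs_mul, abs_of_nonneg (by positivity)]
  · calc C * (√(2 * π) * σ ^ 2 / ν) * gaussianPDFReal 0 v y * |ν - y ^ 2|
        = C * σ ^ 2 / ν * (√(2 * π) * (gaussianPDFReal 0 v y * |ν - y ^ 2|)) := by ring
      _ ≤ C * σ ^ 2 / ν * (2 * √ν) := by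
          gcongr C * σ ^ 2 / ν * ?_
          exact sqrt_two_mul_pi_mul_gaussianPDFReal_mul_abs_sub_sq_le hv y
      _ = 2 * C * (σ ^ 2 / √ν) := by
          have hs : 0 < √ν := sqrt_pos.mpr hν
          field_simp
          rw [sq_sqrt hν.le]
      _ ≤ 2 * C * (1 / lam) := by
          gcongr 2 * C * ?_
          exact sq_div_sqrt_le_inv hσ.ne' hlam0
      _ ≤ 2 * C * (1 / σw) := by gcongr
      _ = 2 * (1 - ε) / (σw * ε) := by
          simp only [C]
          field_simp
end
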